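/- Let G be a finitely generated group acting 3-discontinuously and 2-cocompactly on a compactum T, and let T̃ = Λ(G) ⊔ G be the attractor-sum compactification with shortcut metric δ̄₁. For every constant c > 0 and every subset M ⊆ T̃, the closure of the c-quasigeodesic hull H_c M meets T exactly where the closure of M does: T ∩ cl(M) = T ∩ cl(H_c M). (The Main Lemma.) -/

import Mathlib

open Filter Topology

/-- The vertex set of a locally finite connected graph, presented via its
graph metric `d` (an integer-valued geodesic metric with finite balls). -/
structure GraphDist (V : Type) where
  d : V → V → ℕ
  d_self : ∀ x, d x x = 0
  eq_of_d : ∀ x y, d x y = 0 → x = y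
  d_symm : ∀ x y, d x y = d y x
  d_tri : ∀ x y z, d x z ≤ d x y + d y z
  locallyFinite : ∀ (x : V) (n : ℕ), {y | d x y ≤ n}.Finite
  geodesic : ∀ x y, 0 < d x y → ∃ z, d x z = 1 ∧ d z y + 1 = d x y

namespace GraphDist

variable {V : Type} (G : GraphDist V)

/-- `γ : Fin (n+1) → V` is an edge path (consecutive vertices at distance `≤ 1`). -/
def IsPath {n : ℕ} (γ : Fin (n + 1) → V) : Prop :=
  ∀ i : Fin n, G.d (γ i.castSucc) (γ i.succ) ≤ 1

/-- Floyd length of a path with respect to the scaling function `f` and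
basepoint `v`: the edge `{x,y}` has length `f (d v {x,y})`. -/
def floydLen (f : ℕ → ℝ) (v : V) {n : ℕ} (γ : Fin (n + 1) → V) : ℝ :=
  ∑ i : Fin n, f (min (G.d v (γ i.castSucc)) (G.d v (γ i.succ)))

/-- Floyd distance: infimal Floyd length of edge paths joining two vertices. -/
noncomputable def floydDist (f : ℕ → ℝ) (v : V) (a b : V) : ℝ :=
  sInf {L | ∃ (n : ℕ) (γ : Fin (n + 1) → V), G.IsPath γ ∧ γ 0 = a ∧
    γ (Fin.last n) = b ∧ L = G.floydLen f v γ}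

/-- A finite `c`-quasigeodesic path. -/
def IsQuasigeodesic (c : ℝ) {n : ℕ} (γ : Fin (n + 1) → V) : Prop :=
  G.IsPath γ ∧ ∀ s t : Fin (n + 1),
    (1 / c) * |(s : ℝ) - (t : ℝ)| - c ≤ (G.d (γ s) (γ t) : ℝ) ∧
    (G.d (γ s) (γ t) : ℝ) ≤ c * |(s : ℝ) - (t : ℝ)| + c

/-- A `c`-quasigeodesic ray. -/
def IsQuasigeodesicRay (c : ℝ) (γ : ℕ → V) : Prop :=
  (∀ n : ℕ, G.d (γ n) (γ (n + 1)) ≤ 1) ∧ ∀ s t : ℕ,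
    (1 / c) * |(s : ℝ) - (t : ℝ)| - c ≤ (G.d (γ s) (γ t) : ℝ) ∧
    (G.d (γ s) (γ t) : ℝ) ≤ c * |(s : ℝ) - (t : ℝ)| + c

/-- A finite `α`-distorted (`α`-geodesic) path. -/
def IsAlphaPath (α : ℕ → ℝ) {n : ℕ} (γ : Fin (n + 1) → V) : Prop :=
  G.IsPath γ ∧ ∀ s t : Fin (n + 1),
    (G.d (γ s) (γ t) : ℝ) ≤ α (Nat.dist s t) ∧
    (Nat.dist (s : ℕ) (t : ℕ) : ℝ) ≤ α (G.d (γ s) (γ t))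

/-- An `α`-geodesic ray. -/
def IsAlphaRay (α : ℕ → ℝ) (γ : ℕ → V) : Prop :=
  (∀ n : ℕ, G.d (γ n) (γ (n + 1)) ≤ 1) ∧ ∀ s t : ℕ,
    (G.d (γ s) (γ t) : ℝ) ≤ α (Nat.dist s t) ∧
    (Nat.dist s t : ℝ) ≤ α (G.d (γ s) (γ t))

end GraphDist

/-- `f` is a Floyd scaling function with ratio constant `K`. -/
def IsFloydFunction (f : ℕ → ℝ) (K : ℝ) : Prop :=
  (∀ n, 0 < f n) ∧ (∀ n, 1 ≤ f n / f (n + 1) ∧ f n / f (n + 1) ≤ K) ∧ Summable f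

/-- `α` is a distortion function: non-decreasing with `α n ≥ n`. -/
def IsDistortion (α : ℕ → ℝ) : Prop :=
  (∀ n, 0 < α n) ∧ Monotone α ∧ ∀ n : ℕ, (n : ℝ) ≤ α n

/-- The set of ordered triples of pairwise distinct points of `T`
(a model for the space `Θ³T` of distinct triples). -/
def distinctTriples (T : Type) : Set (T × T × T) :=
  {x | x.1 ≠ x.2.1 ∧ x.1 ≠ x.2.2 ∧ x.2.1 ≠ x.2.2}

/-- Diagonal action of a group element on triples. -/
def tripleSmul {G T : Type} [Group G] [MulAction G T] (g : G) (x : T × T × T) :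
    T × T × T :=
  (g • x.1, g • x.2.1, g • x.2.2)

/-- The action of `G` on `T` is 3-discontinuous (convergence property): the
induced action on the space of distinct triples is properly discontinuous. -/
def ThreeDiscontinuous (G T : Type) [Group G] [MulAction G T]
    [TopologicalSpace T] : Prop :=
  ∀ K L : Set (T × T × T), K ⊆ distinctTriples T → L ⊆ distinctTriples T →
    IsCompact K → IsCompact L →
    {g : G | (tripleSmul g '' K ∩ L).Nonempty}.Finite

/-- The action of `G` on `T` is 3-cocompact: `Θ³T / G` is compact, i.e. there is
a compact fundamental set for the action on distinct triples. -/
def ThreeCocompact (G T : Type) [Group G] [MulAction G T]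
    [TopologicalSpace T] : Prop :=
  ∃ K : Set (T × T × T), K ⊆ distinctTriples T ∧ IsCompact K ∧
    ∀ x ∈ distinctTriples T, ∃ g : G, tripleSmul g x ∈ K

/-- The action of `G` on `T` is 2-cocompact: there is a compact fundamental set
for the action on pairs of distinct points. -/
def TwoCocompact (G T : Type) [Group G] [MulAction G T]
    [TopologicalSpace T] : Prop :=
  ∃ K : Set (T × T), K ⊆ {x | x.1 ≠ x.2} ∧ IsCompact K ∧
    ∀ x : T × T, x.1 ≠ x.2 → ∃ g : G, (g • x.1, g • x.2) ∈ K

/-- `x` is a conical (limit) point for the action of `G` on `T`: there are an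
injective sequence `gₙ` in `G` and distinct points `a ≠ b` with `gₙ • y → a`
for every `y ≠ x` and `gₙ • x → b`. -/
def IsConical (G : Type) {T : Type} [Group G] [MulAction G T]
    [TopologicalSpace T] (x : T) : Prop :=
  ∃ (g : ℕ → G) (a b : T), Function.Injective g ∧ a ≠ b ∧
    (∀ y : T, y ≠ x → Tendsto (fun n => g n • y) atTop (nhds a)) ∧
    Tendsto (fun n => g n • x) atTop (nhds b)

/-- `x` is a limit point of the subgroup `H` acting on `T`: some orbit
accumulates at `x` along an injective sequence in `H`. -/
def IsLimitPointOf {G T : Type} [Group G] [MulAction G T] [TopologicalSpace T]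
    (H : Subgroup G) (x : T) : Prop :=
  ∃ u : ℕ → H, Function.Injective u ∧
    ∃ t : T, Tendsto (fun n => (u n : G) • t) atTop (nhds x)

/-- `p` is a parabolic point: the limit set of its stabilizer is exactly `{p}`. -/
def IsParabolicPt (G : Type) {T : Type} [Group G] [MulAction G T]
    [TopologicalSpace T] (p : T) : Prop :=
  {x : T | IsLimitPointOf (MulAction.stabilizer G p) x} = {p}
namespace GraphDist

variable {V : Type} (G : GraphDist V)

/-- A bi-infinite `c`-quasigeodesic line. -/
def IsQuasigeodesicLine (c : ℝ) (γ : ℤ → V) : Prop :=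
  (∀ n : ℤ, G.d (γ n) (γ (n + 1)) ≤ 1) ∧ ∀ s t : ℤ,
    (1 / c) * |(s : ℝ) - (t : ℝ)| - c ≤ (G.d (γ s) (γ t) : ℝ) ∧
    (G.d (γ s) (γ t) : ℝ) ≤ c * |(s : ℝ) - (t : ℝ)| + c

end GraphDist

/-- The `c`-quasigeodesic hull of a subset `M` of the attractor sum
`T̃ = T ⊔ G` (where `G` sits in `T̃` as the orbit of the basepoint `o`): the
union of `M` with the images of all finite `c`-quasigeodesics with endpoints in
`M`, all `c`-quasigeodesic rays with start and target in `M`, and all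
bi-infinite `c`-quasigeodesics with both targets in `M`. -/
def qHull {G Tt : Type} [Group G] [MulAction G Tt] [TopologicalSpace Tt]
    (dG : GraphDist G) (o : Tt) (c : ℝ) (M : Set Tt) : Set Tt :=
  M ∪
  {x | ∃ (n : ℕ) (γ : Fin (n + 1) → G), dG.IsQuasigeodesic c γ ∧
    γ 0 • o ∈ M ∧ γ (Fin.last n) • o ∈ M ∧ ∃ i, x = γ i • o} ∪
  {x | ∃ γ : ℕ → G, dG.IsQuasigeodesicRay c γ ∧ γ 0 • o ∈ M ∧
    (∃ q ∈ M, Tendsto (fun k : ℕ => γ k • o) atTop (nhds q)) ∧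
    ∃ i, x = γ i • o} ∪
  {x | ∃ γ : ℤ → G, dG.IsQuasigeodesicLine c γ ∧
    (∃ q ∈ M, Tendsto (fun k : ℕ => γ (k : ℤ) • o) atTop (nhds q)) ∧
    (∃ q ∈ M, Tendsto (fun k : ℕ => γ (-(k : ℤ)) • o) atTop (nhds q)) ∧
    ∃ i : ℤ, x = γ i • o}

/-!
Let `x ∉ G • o` be a limit of hull points `η i • o`. Only finitely many group elements lie in a
word-metric ball around `1`, so the `η i` are eventually far from `1`. A quasigeodesic cannot come
back close to `1` on both sides of a far point, so one side of `η` stays far from `1`. By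
Karlsson's lemma, far quasigeodesic segments are short in the Floyd metric, hence in `Tt`; so the
end of that side, which lies in `M` (as an endpoint or a limit), is close to `η i • o`.
-/

lemma Summable.comp_div_sub {f : ℕ → ℝ} (hf0 : ∀ n, 0 ≤ f n) (hf : Summable f)
    {k : ℕ} (hk : k ≠ 0) (b : ℕ) : Summable fun j => f (j / k - b) := by
  have : NeZero k := ⟨hk⟩
  have hsub : Summable fun q => f (q - b) :=
    (summable_nat_add_iff b).1 (by simpa only [Nat.add_sub_cancel] using hf)
  have hprod : Summable fun p : ℕ × Fin k => f (p.1 - b) := by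
    refine (summable_prod_of_nonneg fun _ => hf0 _).2 ⟨fun _ => .of_finite, ?_⟩
    simpa only [tsum_const, Nat.card_eq_fintype_card, Fintype.card_fin, nsmul_eq_mul]
      using hsub.mul_left (k : ℝ)
  exact (Nat.divModEquiv k).summable_iff.2 hprod

lemma sum_le_tsum_of_injOn {α : Type*} {φ : ℕ → ℝ} (hφ0 : ∀ n, 0 ≤ φ n) (hφ : Summable φ)
    (s : Finset α) {g : α → ℕ} (hg : Set.InjOn g s) : ∑ i ∈ s, φ (g i) ≤ ∑' j, φ j := by
  rw [← Finset.sum_image hg]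
  exact hφ.sum_le_tsum _ fun j _ => hφ0 j

lemma sum_comp_dist_le_two_mul_tsum {φ : ℕ → ℝ} (hφ0 : ∀ n, 0 ≤ φ n) (hφ : Summable φ)
    (s : Finset ℕ) (t₀ : ℕ) : ∑ i ∈ s, φ (Nat.dist i t₀) ≤ 2 * ∑' j, φ j := by
  classical
  rw [← Finset.sum_filter_add_sum_filter_not s (t₀ ≤ ·), two_mul]
  have hright : ∑ i ∈ s with t₀ ≤ i, φ (Nat.dist i t₀) = ∑ i ∈ s with t₀ ≤ i, φ (i - t₀) :=
    Finset.sum_congr rfl fun i hi => by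
      rw [Nat.dist_comm, Nat.dist_eq_sub_of_le (Finset.mem_filter.1 hi).2]
  have hleft : ∑ i ∈ s with ¬t₀ ≤ i, φ (Nat.dist i t₀) = ∑ i ∈ s with ¬t₀ ≤ i, φ (t₀ - i) :=
    Finset.sum_congr rfl fun i hi => by
      rw [Nat.dist_eq_sub_of_le (le_of_not_ge (Finset.mem_filter.1 hi).2)]
  rw [hright, hleft]
  refine add_le_add (sum_le_tsum_of_injOn hφ0 hφ _ fun i hi j hj hij => ?_)
    (sum_le_tsum_of_injOn hφ0 hφ _ fun i hi j hj hij => ?_)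
  · simp only [Finset.mem_coe, Finset.mem_filter] at hi hj
    omega
  · simp only [Finset.mem_coe, Finset.mem_filter] at hi hj
    omega

lemma Nat.cast_dist_eq_abs_sub (s t : ℕ) : (Nat.dist s t : ℝ) = |(s : ℝ) - t| := by
  rcases le_total s t with h | h
  · rw [Nat.dist_eq_sub_of_le h, Nat.cast_sub h, abs_sub_comm, abs_of_nonneg (by simpa using h)]
  · rw [Nat.dist_eq_sub_of_le_right h, Nat.cast_sub h, abs_of_nonneg (by simpa using h)]

/-- If the point of a path closest to `v` is at distance `m` from `v`, the lower quasigeodesic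
bound (with `c ≤ L`) puts the point at index distance `j` from it at distance at least
`max m (j / L - L - m)` from `v`; the `- 1` accounts for the other endpoint of the edge. -/
def karlssonWeight (f : ℕ → ℝ) (L m j : ℕ) : ℝ := f (max m (j / L - L - m) - 1)

lemma karlssonWeight_le {f : ℕ → ℝ} (hfa : Antitone f) (L m j : ℕ) :
    karlssonWeight f L m j ≤ f (j / (L * 2) - (L + 1)) := by
  refine hfa ?_
  rw [← Nat.div_div_eq_div_mul]
  omega

lemma summable_karlssonWeight {f : ℕ → ℝ} (hf0 : ∀ n, 0 ≤ f n) (hfa : Antitone f)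
    (hfs : Summable f) {L : ℕ} (hL : L ≠ 0) (m : ℕ) : Summable (karlssonWeight f L m) :=
  (hfs.comp_div_sub hf0 (k := L * 2) (by omega) (L + 1)).of_nonneg_of_le (fun _ => hf0 _)
    (karlssonWeight_le hfa L m)

lemma tendsto_tsum_karlssonWeight {f : ℕ → ℝ} (hf0 : ∀ n, 0 ≤ f n) (hfa : Antitone f)
    (hfs : Summable f) {L : ℕ} (hL : L ≠ 0) :
    Tendsto (fun m => ∑' j, karlssonWeight f L m j) atTop (𝓝 0) := by
  have hpointwise : ∀ j, Tendsto (karlssonWeight f L · j) atTop (𝓝 0) := fun j =>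
    tendsto_of_tendsto_of_tendsto_of_le_of_le tendsto_const_nhds
      (hfs.tendsto_atTop_zero.comp (tendsto_sub_atTop_nat 1)) (fun m => hf0 _)
      (fun m => hfa (by omega : m - 1 ≤ max m (j / L - L - m) - 1))
  simpa only [tsum_zero] using tendsto_tsum_of_dominated_convergence
    (hfs.comp_div_sub hf0 (k := L * 2) (by omega) (L + 1)) hpointwise
    (Eventually.of_forall fun m j =>
      (Real.norm_of_nonneg (hf0 _)).trans_le (karlssonWeight_le hfa L m j))

namespace GraphDist

variable {V : Type} (G : GraphDist V)

lemma div_le_d_add_of_lowerBound {c : ℝ} (hc : 0 < c) {L : ℕ} (hL : c ≤ L) {n : ℕ}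
    {γ : Fin (n + 1) → V}
    (hlow : ∀ s t : Fin (n + 1), (1 / c) * |(s : ℝ) - t| - c ≤ G.d (γ s) (γ t))
    (s t : Fin (n + 1)) : Nat.dist s t / L ≤ G.d (γ s) (γ t) + L := by
  have h : ((Nat.dist s t / L : ℕ) : ℝ) ≤ G.d (γ s) (γ t) + L :=
    calc ((Nat.dist s t / L : ℕ) : ℝ) ≤ (Nat.dist s t : ℝ) / L := Nat.cast_div_le
      _ ≤ |(s : ℝ) - t| / c := by
        rw [Nat.cast_dist_eq_abs_sub]
        exact div_le_div_of_nonneg_left (abs_nonneg _) hc hL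
      _ ≤ G.d (γ s) (γ t) + L := by
        have := hlow s t
        rw [one_div_mul_eq_div] at this
        linarith
  exact_mod_cast h

/-- Karlsson's lemma. -/
theorem exists_floydLen_le {f : ℕ → ℝ} (hf0 : ∀ n, 0 ≤ f n) (hfa : Antitone f)
    (hfs : Summable f) (v : V) {c : ℝ} (hc : 0 < c) {ε : ℝ} (hε : 0 < ε) :
    ∃ D : ℕ, ∀ (n : ℕ) (γ : Fin (n + 1) → V), G.IsPath γ →
      (∀ s t : Fin (n + 1), (1 / c) * |(s : ℝ) - t| - c ≤ G.d (γ s) (γ t)) →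
      (∀ t, D ≤ G.d v (γ t)) → G.floydLen f v γ ≤ ε := by
  set L := ⌈c⌉₊
  have hL0 : L ≠ 0 := (Nat.ceil_pos.2 hc).ne'
  obtain ⟨D, hD⟩ := eventually_atTop.1 ((tendsto_tsum_karlssonWeight hf0 hfa hfs hL0).eventually
    (ge_mem_nhds (half_pos hε)))
  refine ⟨D, fun n γ hpath hlow hfar => ?_⟩
  obtain ⟨t₀, -, hmin⟩ := Finset.exists_min_image Finset.univ (fun t => G.d v (γ t))
    Finset.univ_nonempty
  set m := G.d v (γ t₀)
  have hweight0 : ∀ j, 0 ≤ karlssonWeight f L m j := fun j => hf0 _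
  have hedge (i : Fin n) : f (min (G.d v (γ i.castSucc)) (G.d v (γ i.succ))) ≤
      karlssonWeight f L m (Nat.dist i t₀) := by
    have hj := G.div_le_d_add_of_lowerBound hc (L := L) (Nat.le_ceil c) hlow i.castSucc t₀
    rw [Fin.val_castSucc] at hj
    have hto := G.d_tri (γ i.castSucc) v (γ t₀)
    have hstep := G.d_tri v (γ i.succ) (γ i.castSucc)
    have hm := hmin i.castSucc (Finset.mem_univ _)
    rw [G.d_symm (γ i.castSucc) v] at hto
    rw [G.d_symm (γ i.succ)] at hstep
    have := hpath i
    exact hfa (by omega)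
  calc G.floydLen f v γ ≤ ∑ i : Fin n, karlssonWeight f L m (Nat.dist i t₀) :=
        Finset.sum_le_sum fun i _ => hedge i
    _ = ∑ i ∈ Finset.range n, karlssonWeight f L m (Nat.dist i t₀) :=
        Fin.sum_univ_eq_sum_range (fun i => karlssonWeight f L m (Nat.dist i t₀)) n
    _ ≤ 2 * ∑' j, karlssonWeight f L m j :=
        sum_comp_dist_le_two_mul_tsum hweight0 (summable_karlssonWeight hf0 hfa hfs hL0 m) _ _
    _ ≤ ε := by linarith [hD m (hfar t₀)]

/-- Finite paths, rays and lines all have this form, with `S` an interval of `ℤ`. -/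
def IsQuasigeodesicOn (c : ℝ) (η : ℤ → V) (S : Set ℤ) : Prop :=
  (∀ k ∈ S, k + 1 ∈ S → G.d (η k) (η (k + 1)) ≤ 1) ∧ ∀ s ∈ S, ∀ t ∈ S,
    (1 / c) * |(s : ℝ) - t| - c ≤ G.d (η s) (η t) ∧ (G.d (η s) (η t) : ℝ) ≤ c * |(s : ℝ) - t| + c

variable {G}

lemma IsQuasigeodesicLine.isQuasigeodesicOn {c : ℝ} {γ : ℤ → V}
    (hγ : G.IsQuasigeodesicLine c γ) : G.IsQuasigeodesicOn c γ Set.univ :=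
  ⟨fun k _ _ => hγ.1 k, fun s _ t _ => hγ.2 s t⟩

lemma IsQuasigeodesicRay.isQuasigeodesicOn {c : ℝ} {γ : ℕ → V}
    (hγ : G.IsQuasigeodesicRay c γ) :
    G.IsQuasigeodesicOn c (fun k => γ k.toNat) (Set.Ici 0) := by
  refine ⟨fun k hk _ => ?_, fun s hs t ht => ?_⟩
  · rw [Set.mem_Ici] at hk
    simpa only [show (k + 1).toNat = k.toNat + 1 by omega] using hγ.1 k.toNat
  · have := hγ.2 s.toNat t.toNat
    rwa [← Int.cast_natCast, ← Int.cast_natCast t.toNat, Int.toNat_of_nonneg hs,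
      Int.toNat_of_nonneg ht] at this

lemma IsQuasigeodesic.isQuasigeodesicOn {c : ℝ} {n : ℕ} {γ : Fin (n + 1) → V}
    (hγ : G.IsQuasigeodesic c γ) :
    G.IsQuasigeodesicOn c (fun k => γ (Fin.clamp k.toNat n)) (Set.Icc 0 n) := by
  refine ⟨fun k hk hk' => ?_, fun s hs t ht => ?_⟩
  · simp only [Set.mem_Icc] at hk hk'
    have := hγ.1 ⟨k.toNat, by omega⟩
    convert this using 3 <;> ext <;> simp <;> omega
  · have := hγ.2 (Fin.clamp s.toNat n) (Fin.clamp t.toNat n)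
    simp only [Set.mem_Icc] at hs ht
    have hs' : ((Fin.clamp s.toNat n : ℕ) : ℝ) = s := by
      rw [Fin.coe_clamp, min_eq_left (by omega)]; exact_mod_cast Int.toNat_of_nonneg hs.1
    have ht' : ((Fin.clamp t.toNat n : ℕ) : ℝ) = t := by
      rw [Fin.coe_clamp, min_eq_left (by omega)]; exact_mod_cast Int.toNat_of_nonneg ht.1
    rwa [hs', ht'] at this

lemma IsQuasigeodesicOn.far_left_or_far_right {c : ℝ} (hc : 0 < c) {η : ℤ → V} {S : Set ℤ}
    (hη : G.IsQuasigeodesicOn c η S) (v : V) {D : ℕ} {i : ℤ} (hi : i ∈ S)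
    (hfar : (D : ℝ) + c * (c * (2 * D + c)) + c ≤ G.d v (η i)) :
    (∀ s ∈ S, s ≤ i → D ≤ G.d v (η s)) ∨ (∀ t ∈ S, i ≤ t → D ≤ G.d v (η t)) := by
  by_contra! h
  obtain ⟨⟨s, hs, hsi, hsD⟩, ⟨t, ht, hit, htD⟩⟩ := h
  have hst : (G.d (η s) (η t) : ℝ) < 2 * D := by
    have := G.d_tri (η s) v (η t)
    rw [G.d_symm (η s) v] at this
    exact_mod_cast (by omega : G.d (η s) (η t) < 2 * D)
  have hvi : (G.d v (η i) : ℝ) ≤ G.d v (η s) + G.d (η s) (η i) := by exact_mod_cast G.d_tri _ _ _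
  have hsD' : (G.d v (η s) : ℝ) < D := by exact_mod_cast hsD
  have hsi' : |(s : ℝ) - i| ≤ |(s : ℝ) - t| := by
    have : (s : ℝ) ≤ i := by exact_mod_cast hsi
    have : (i : ℝ) ≤ t := by exact_mod_cast hit
    rw [abs_of_nonpos (by linarith), abs_of_nonpos (by linarith)]
    linarith
  have hlen : |(s : ℝ) - t| < c * (2 * D + c) := by
    have := (hη.2 s hs t ht).1
    rw [one_div_mul_eq_div] at this
    have := (div_lt_iff₀ hc).1 (by linarith : |(s : ℝ) - t| / c < 2 * D + c)
    linarith
  have hsi'' : (G.d (η s) (η i) : ℝ) < c * (c * (2 * D + c)) + c := by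
    have := (hη.2 s hs i hi).2
    nlinarith
  linarith

variable (G)

theorem exists_floydDist_le {f : ℕ → ℝ} (hf0 : ∀ n, 0 ≤ f n) (hfa : Antitone f)
    (hfs : Summable f) (v : V) {c : ℝ} (hc : 0 < c) {ε : ℝ} (hε : 0 < ε) :
    ∃ D : ℕ, ∀ (η : ℤ → V) (S : Set ℤ) (a b : ℤ), G.IsQuasigeodesicOn c η S → a ≤ b →
      Set.Icc a b ⊆ S → (∀ k ∈ Set.Icc a b, D ≤ G.d v (η k)) →
      G.floydDist f v (η a) (η b) ≤ ε := by
  obtain ⟨D, hD⟩ := G.exists_floydLen_le hf0 hfa hfs v hc hε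
  refine ⟨D, fun η S a b hη hab hS hfar => ?_⟩
  set θ : Fin ((b - a).toNat + 1) → V := fun k => η (a + k)
  have hθS (k : Fin ((b - a).toNat + 1)) : a + k ∈ S := hS ⟨by omega, by omega⟩
  have hpath : G.IsPath θ := fun k => by
    have h := hη.1 (a + k) (by simpa using hθS k.castSucc) (by simpa [add_assoc] using hθS k.succ)
    simpa [θ, add_assoc] using h
  have hlow (s t : Fin ((b - a).toNat + 1)) :
      (1 / c) * |(s : ℝ) - t| - c ≤ G.d (θ s) (θ t) := by
    have := (hη.2 _ (hθS s) _ (hθS t)).1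
    push_cast at this
    rwa [add_sub_add_left_eq_sub] at this
  have hlast : θ (Fin.last _) = η b := by simp only [θ, Fin.val_last]; congr 1; omega
  calc G.floydDist f v (η a) (η b) = G.floydDist f v (θ 0) (θ (Fin.last _)) := by
        rw [hlast]; simp [θ]
    _ ≤ G.floydLen f v θ := by
        refine csInf_le ⟨0, ?_⟩ ⟨_, θ, hpath, rfl, rfl, rfl⟩
        rintro _ ⟨_, γ, -, -, -, rfl⟩
        exact Finset.sum_nonneg fun _ _ => hf0 _
    _ ≤ ε := hD _ θ hpath hlow fun k => hfar _ ⟨by omega, by omega⟩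

end GraphDist

lemma IsFloydFunction.antitone {f : ℕ → ℝ} {K : ℝ} (hf : IsFloydFunction f K) : Antitone f :=
  antitone_nat_of_succ_le fun n => by
    simpa only [le_div_iff₀ (hf.1 (n + 1)), one_mul] using (hf.2.1 n).1

section Hull

variable {G Tt : Type} [Group G] [MulAction G Tt]

section TopologicalSpace

variable [TopologicalSpace Tt]

lemma subset_qHull (dG : GraphDist G) (o : Tt) (c : ℝ) (M : Set Tt) :
    M ⊆ qHull dG o c M :=
  fun _ hz => Or.inl (Or.inl (Or.inl hz))

variable (o : Tt) (M : Set Tt)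

def HasLeftEndIn (η : ℤ → G) (S : Set ℤ) (i : ℤ) : Prop :=
  (∃ a ≤ i, Set.Icc a i ⊆ S ∧ η a • o ∈ M) ∨
    (Set.Iic i ⊆ S ∧ ∃ q ∈ M, Tendsto (fun k : ℕ => η (-k) • o) atTop (𝓝 q))

def HasRightEndIn (η : ℤ → G) (S : Set ℤ) (i : ℤ) : Prop :=
  (∃ b ≥ i, Set.Icc i b ⊆ S ∧ η b • o ∈ M) ∨
    (Set.Ici i ⊆ S ∧ ∃ q ∈ M, Tendsto (fun k : ℕ => η k • o) atTop (𝓝 q))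

variable {o M}

lemma exists_isQuasigeodesicOn_of_mem_qHull {dG : GraphDist G} {c : ℝ} {y : Tt}
    (hy : y ∈ qHull dG o c M) (hyM : y ∉ M) :
    ∃ (η : ℤ → G) (S : Set ℤ) (i : ℤ), dG.IsQuasigeodesicOn c η S ∧ i ∈ S ∧ y = η i • o ∧
      HasLeftEndIn o M η S i ∧ HasRightEndIn o M η S i := by
  simp only [qHull, Set.mem_union, Set.mem_ofPred_eq] at hy
  rcases hy with ((hy | ⟨n, γ, hγ, h0, hn, i, rfl⟩) | ⟨γ, hγ, h0, ⟨q, hq, hlim⟩, i, rfl⟩) |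
    ⟨γ, hγ, ⟨q₁, hq₁, hlim₁⟩, ⟨q₂, hq₂, hlim₂⟩, i, rfl⟩
  · exact absurd hy hyM
  · have hin : (i : ℕ) ≤ n := Nat.lt_succ_iff.1 i.isLt
    refine ⟨_, _, i, hγ.isQuasigeodesicOn, ⟨by omega, by omega⟩, ?_,
      .inl ⟨0, by omega, Set.Icc_subset_Icc_right (by omega), ?_⟩,
      .inl ⟨n, by omega, Set.Icc_subset_Icc_left (by omega), ?_⟩⟩
    · simp [Fin.clamp, hin]
    · simpa [Fin.clamp] using h0
    · simpa [Fin.clamp, Fin.last] using hn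
  · refine ⟨_, _, i, hγ.isQuasigeodesicOn, Int.natCast_nonneg i, by simp,
      .inl ⟨0, Int.natCast_nonneg i, Set.Icc_subset_Ici_self, by simpa using h0⟩,
      .inr ⟨Set.Ici_subset_Ici.2 (Int.natCast_nonneg i), q, hq, by simpa using hlim⟩⟩
  · exact ⟨γ, _, i, hγ.isQuasigeodesicOn, Set.mem_univ i, rfl,
      .inr ⟨Set.subset_univ _, q₂, hq₂, hlim₂⟩, .inr ⟨Set.subset_univ _, q₁, hq₁, hlim₁⟩⟩

end TopologicalSpace

variable [MetricSpace Tt] {o : Tt} {M : Set Tt} {η : ℤ → G} {S : Set ℤ} {i : ℤ} {P : ℤ → Prop}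
  {ε : ℝ}

lemma HasLeftEndIn.exists_dist_le (hend : HasLeftEndIn o M η S i)
    (hseg : ∀ a b, a ≤ b → Set.Icc a b ⊆ S → (∀ k ∈ Set.Icc a b, P k) →
      dist (η a • o) (η b • o) ≤ ε)
    (hP : ∀ k ∈ S, k ≤ i → P k) : ∃ q ∈ M, dist (η i • o) q ≤ ε := by
  rcases hend with ⟨a, hai, hS, ha⟩ | ⟨hS, q, hq, hlim⟩
  · exact ⟨_, ha, dist_comm (η i • o) _ ▸ hseg a i hai hS fun k hk => hP k (hS hk) hk.2⟩
  · refine ⟨q, hq, le_of_tendsto (tendsto_const_nhds.dist hlim) ?_⟩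
    filter_upwards [(tendsto_natCast_atTop_atTop (R := ℤ)).eventually_ge_atTop (-i)] with k hk
    rw [dist_comm]
    exact hseg _ i (by omega) (Set.Icc_subset_Iic_self.trans hS) fun j hj => hP j (hS hj.2) hj.2

lemma HasRightEndIn.exists_dist_le (hend : HasRightEndIn o M η S i)
    (hseg : ∀ a b, a ≤ b → Set.Icc a b ⊆ S → (∀ k ∈ Set.Icc a b, P k) →
      dist (η a • o) (η b • o) ≤ ε)
    (hP : ∀ k ∈ S, i ≤ k → P k) : ∃ q ∈ M, dist (η i • o) q ≤ ε := by
  rcases hend with ⟨b, hib, hS, hb⟩ | ⟨hS, q, hq, hlim⟩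
  · exact ⟨_, hb, hseg i b hib hS fun k hk => hP k (hS hk) hk.1⟩
  · refine ⟨q, hq, le_of_tendsto (tendsto_const_nhds.dist hlim) ?_⟩
    filter_upwards [(tendsto_natCast_atTop_atTop (R := ℤ)).eventually_ge_atTop i] with k hk
    exact hseg i k hk (Set.Icc_subset_Ici_self.trans hS) fun j hj => hP j (hS hj.1) hj.1

lemma exists_pos_forall_le_dist_smul {s : Set G} (hs : s.Finite) {x : Tt}
    (hx : ∀ g : G, x ≠ g • o) : ∃ r > 0, ∀ g ∈ s, r ≤ dist x (g • o) := by
  obtain ⟨r, hr, hball⟩ := Metric.isOpen_iff.1 (hs.image (· • o)).isClosed.isOpen_compl x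
    fun ⟨g, _, hg⟩ => hx g hg.symm
  exact ⟨r, hr, fun g hg => not_lt.1 fun h => hball (Metric.mem_ball'.2 h) ⟨g, hg, rfl⟩⟩

theorem mem_closure_of_mem_closure_qHull (dG : GraphDist G) {f : ℕ → ℝ}
    (hf0 : ∀ n, 0 ≤ f n) (hfa : Antitone f) (hfs : Summable f)
    (hcomp : ∀ g h : G, dist (g • o) (h • o) ≤ dG.floydDist f 1 g h) {c : ℝ} (hc : 0 < c)
    {x : Tt} (hx : ∀ g : G, x ≠ g • o) (hxH : x ∈ closure (qHull dG o c M)) :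
    x ∈ closure M := by
  refine Metric.mem_closure_iff.2 fun ε hε => ?_
  obtain ⟨D, hD⟩ := dG.exists_floydDist_le hf0 hfa hfs 1 hc (half_pos hε)
  set R : ℝ := D + c * (c * (2 * D + c)) + c
  obtain ⟨r, hr, hrx⟩ := exists_pos_forall_le_dist_smul (dG.locallyFinite 1 ⌈R⌉₊) hx
  obtain ⟨y, hyH, hxy⟩ := Metric.mem_closure_iff.1 hxH (min (ε / 2) r) (lt_min (half_pos hε) hr)
  have hyε := hxy.trans_le (min_le_left _ _)
  by_cases hyM : y ∈ M
  · exact ⟨y, hyM, by linarith⟩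
  obtain ⟨η, S, i, hη, hi, rfl, hleft, hright⟩ := exists_isQuasigeodesicOn_of_mem_qHull hyH hyM
  have hRi : R ≤ dG.d 1 (η i) := by
    by_contra! h
    have hle : (dG.d 1 (η i) : ℝ) ≤ ⌈R⌉₊ := h.le.trans (Nat.le_ceil R)
    have := hrx (η i) (by exact_mod_cast hle)
    linarith [hxy.trans_le (min_le_right _ _)]
  have hseg (a b : ℤ) (hab : a ≤ b) (hS : Set.Icc a b ⊆ S)
      (hfar : ∀ k ∈ Set.Icc a b, D ≤ dG.d 1 (η k)) : dist (η a • o) (η b • o) ≤ ε / 2 :=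
    (hcomp _ _).trans (hD η S a b hη hab hS hfar)
  obtain ⟨q, hq, hiq⟩ : ∃ q ∈ M, dist (η i • o) q ≤ ε / 2 := by
    rcases hη.far_left_or_far_right hc 1 hi hRi with hP | hP
    · exact hleft.exists_dist_le hseg hP
    · exact hright.exists_dist_le hseg hP
  exact ⟨q, hq, by linarith [dist_triangle x (η i • o) q]⟩

end Hull

theorem stmt16_general {G Tt : Type} [Group G]
    [MetricSpace Tt] [MulAction G Tt]
    (o : Tt)
    (dG : GraphDist G)
    (f : ℕ → ℝ) (K : ℝ) (hf : IsFloydFunction f K)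
    (hcomp : ∀ g h : G, dist (g • o) (h • o) ≤ dG.floydDist f 1 g h)
    (c : ℝ) (hc : 0 < c) (M : Set Tt) :
    {x : Tt | ∀ g : G, x ≠ g • o} ∩ closure M =
      {x : Tt | ∀ g : G, x ≠ g • o} ∩ closure (qHull dG o c M) := by
  ext x
  refine ⟨fun ⟨hx, hxM⟩ => ⟨hx, closure_mono (subset_qHull dG o c M) hxM⟩,
    fun ⟨hx, hxH⟩ => ⟨hx, ?_⟩⟩
  exact mem_closure_of_mem_closure_qHull dG (fun n => (hf.1 n).le) hf.antitone hf.2.2 hcomp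
    hc hx hxH

/-- the Main Lemma: let `G` be a finitely generated group (with
left-invariant locally finite Cayley graph metric `dG`) acting
3-discontinuously and 2-cocompactly on the metrizable compactum
`T̃ = Λ(G) ⊔ G` (the attractor sum), where `G` sits in `T̃` as the open
discrete orbit of the basepoint `o`, and the (shortcut) metric of `T̃` is
dominated on `G` by the Floyd metric. Then for every `c > 0` and every
`M ⊆ T̃`, the closures of `M` and of its `c`-quasigeodesic hull meet
`T = T̃ ∖ G·o` in the same set. -/
theorem stmt16 {G Tt : Type} [Group G]
    [MetricSpace Tt] [CompactSpace Tt] [MulAction G Tt]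
    (hcont : ∀ g : G, Continuous (fun x : Tt => g • x))
    (h3 : ThreeDiscontinuous G Tt) (h2 : TwoCocompact G Tt)
    (o : Tt) (hinj : Function.Injective (fun g : G => g • o))
    (hopen : ∀ g : G, IsOpen ({g • o} : Set Tt))
    (dG : GraphDist G)
    (hinv : ∀ g x y : G, dG.d (g * x) (g * y) = dG.d x y)
    (f : ℕ → ℝ) (K : ℝ) (hK : 0 < K) (hf : IsFloydFunction f K)
    (hcomp : ∀ g h : G, dist (g • o) (h • o) ≤ dG.floydDist f 1 g h)
    (c : ℝ) (hc : 0 < c) (M : Set Tt) :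
    {x : Tt | ∀ g : G, x ≠ g • o} ∩ closure M =
      {x : Tt | ∀ g : G, x ≠ g • o} ∩ closure (qHull dG o c M) :=
  stmt16_general o dG f K hf hcomp c hc M
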